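/- arXiv:1306.4166 — 3 statements merged into one kernel-verified Lean document; each statement's English description precedes it below -/
import Mathlib

section
/- For v = 1 the Rayleigh-normal distribution function equals the Rayleigh CDF with scale √2: Z_1(μ) = 1 - exp(-μ²/4) for μ > 0 and Z_1(μ) = 0 for μ ≤ 0. -/
/-!
With `φ_m` the `N(m, 1)` density and `Φ` the standard normal CDF: the profiles `A = Φ(· - c)`,
`c ≤ 0`, are admissible and have fidelity `∫ √(φ_c φ_μ) = exp (-(c - μ)² / 8)`; take `c = 0` when
`μ > 0` and `c = μ` when `μ ≤ 0`.

Conversely, fix `s ≥ 0`. Integrating `(A - Φ)' e^{sx}` by parts, the constraints `0 ≤ A - Φ ≤ 1 - Φ`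
give `∫ A' e^{sx} ≤ ∫ φ_0 e^{sx} = e^{s²/2}`. Writing `A' φ_μ = (A' e^{sx}) (φ_μ e^{-sx})` and
applying AM-GM with weights `e^{∓sμ/2}` bounds every fidelity by `e^{s(s - μ)/2}`, which for
`s = max μ 0 / 2` is the value attained above.
-/

noncomputable def normalPDF (μ v x : ℝ) : ℝ :=
  (Real.sqrt (2 * Real.pi * v))⁻¹ * Real.exp (-(x - μ)^2 / (2 * v))

noncomputable def normalCDF (μ v x : ℝ) : ℝ :=
  ∫ t in Set.Iio x, normalPDF μ v t

/-- The set of fidelities appearing in the definition of the Rayleigh-normal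
distribution function: `A` runs over continuously differentiable monotone increasing
functions with `Φ ≤ A ≤ 1`. -/
noncomputable def RNFidelities (μ v : ℝ) : Set ℝ :=
  {r | ∃ A : ℝ → ℝ, ContDiff ℝ 1 A ∧ Monotone A ∧
    (∀ x, normalCDF 0 1 x ≤ A x) ∧ (∀ x, A x ≤ 1) ∧
    r = ∫ x : ℝ, Real.sqrt (deriv A x * normalPDF μ v x)}

/-- The Rayleigh-normal distribution function `Z_v(μ)`. -/
noncomputable def RayleighNormal (v μ : ℝ) : ℝ :=
  1 - (sSup (RNFidelities μ v))^2

open Real MeasureTheory Set Filter ProbabilityTheory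

lemma hasDerivAt_integral_Iio {f : ℝ → ℝ} (hf : Integrable f) (hc : Continuous f) (x : ℝ) :
    HasDerivAt (fun y => ∫ t in Iio y, f t) (f x) x := by
  have hsplit : ∀ y, ∫ t in Iio y, f t = (∫ t in Iic 0, f t) + ∫ t in (0 : ℝ)..y, f t := by
    intro y
    rw [setIntegral_congr_set Iio_ae_eq_Iic,
      ← intervalIntegral.integral_Iic_sub_Iic hf.integrableOn hf.integrableOn]
    ring
  simp_rw [hsplit]
  exact (intervalIntegral.integral_hasDerivAt_right hf.intervalIntegrable
    hc.aestronglyMeasurable.stronglyMeasurableAtFilter hc.continuousAt).const_add _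

lemma integrable_of_intervalIntegral_le {f : ℝ → ℝ} {C : ℝ} (hf : Continuous f) (hf0 : 0 ≤ f)
    (hC : ∀ a b, a ≤ b → ∫ x in a..b, f x ≤ C) : Integrable f := by
  refine integrable_of_intervalIntegral_norm_bounded (a := Neg.neg) (b := id) C
    (fun _ => hf.integrableOn_Ioc) tendsto_neg_atTop_atBot tendsto_id ?_
  filter_upwards [eventually_ge_atTop 0] with b hb
  simpa only [id, Real.norm_of_nonneg (hf0 _)] using hC (-b) b (by linarith)

lemma integral_le_of_intervalIntegral_le {f : ℝ → ℝ} {C : ℝ} (hf : Integrable f)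
    (hC : ∀ a b, a ≤ b → ∫ x in a..b, f x ≤ C) : ∫ x, f x ≤ C := by
  refine le_of_tendsto
    (intervalIntegral_tendsto_integral hf tendsto_neg_atTop_atBot tendsto_id) ?_
  filter_upwards [eventually_ge_atTop 0] with b hb
  exact hC (-b) b (by linarith)

lemma sqrt_mul_le_add_div_two {u v t : ℝ} (hu : 0 ≤ u) (hv : 0 ≤ v) (ht : 0 < t) :
    √(u * v) ≤ (t * u + t⁻¹ * v) / 2 := by
  have hsplit : √(u * v) = √(t * u) * √(t⁻¹ * v) := by
    rw [← Real.sqrt_mul (by positivity)]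
    congr 1
    field_simp
  rw [hsplit]
  nlinarith [two_mul_le_add_sq (√(t * u)) (√(t⁻¹ * v)), Real.sq_sqrt (mul_nonneg ht.le hu),
    Real.sq_sqrt (mul_nonneg (inv_nonneg.2 ht.le) hv)]

lemma normalPDF_one_eq_gaussianPDFReal (m : ℝ) : normalPDF m 1 = gaussianPDFReal m 1 := by
  ext x
  simp [normalPDF, gaussianPDFReal]

@[fun_prop]
lemma continuous_normalPDF (m v : ℝ) : Continuous (normalPDF m v) := by
  unfold normalPDF
  fun_prop

lemma normalPDF_nonneg (m v x : ℝ) : 0 ≤ normalPDF m v x := by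
  unfold normalPDF
  positivity

lemma integrable_normalPDF_one (m : ℝ) : Integrable (normalPDF m 1) :=
  normalPDF_one_eq_gaussianPDFReal m ▸ integrable_gaussianPDFReal m 1

lemma integral_normalPDF_one (m : ℝ) : ∫ x, normalPDF m 1 x = 1 := by
  rw [normalPDF_one_eq_gaussianPDFReal, integral_gaussianPDFReal_eq_one m one_ne_zero]

lemma normalPDF_one_mul_exp (m c x : ℝ) :
    normalPDF m 1 x * exp (c * x) = exp (c * m + c ^ 2 / 2) * normalPDF (m + c) 1 x := by
  simp only [normalPDF, mul_one]
  rw [mul_assoc, ← exp_add, mul_left_comm, ← exp_add]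
  ring_nf

lemma integrable_normalPDF_one_mul_exp (m c : ℝ) :
    Integrable fun x => normalPDF m 1 x * exp (c * x) := by
  simp_rw [normalPDF_one_mul_exp, normalPDF_one_eq_gaussianPDFReal]
  exact (integrable_gaussianPDFReal _ _).const_mul _

lemma integral_normalPDF_one_mul_exp (m c : ℝ) :
    ∫ x, normalPDF m 1 x * exp (c * x) = exp (c * m + c ^ 2 / 2) := by
  simp_rw [normalPDF_one_mul_exp, normalPDF_one_eq_gaussianPDFReal]
  rw [integral_const_mul, integral_gaussianPDFReal_eq_one _ one_ne_zero, mul_one]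

lemma sqrt_normalPDF_one_mul (a b x : ℝ) :
    √(normalPDF a 1 x * normalPDF b 1 x)
      = exp (-(a - b) ^ 2 / 8) * normalPDF ((a + b) / 2) 1 x := by
  rw [Real.sqrt_eq_iff_eq_sq (mul_nonneg (normalPDF_nonneg _ _ _) (normalPDF_nonneg _ _ _))
    (mul_nonneg (exp_pos _).le (normalPDF_nonneg _ _ _))]
  simp only [normalPDF, mul_one]
  rw [mul_mul_mul_comm, ← exp_add, mul_pow, mul_pow, ← exp_nat_mul, ← exp_nat_mul, ← sq,
    mul_left_comm, ← exp_add]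
  ring_nf

lemma hasDerivAt_normalCDF_one (m x : ℝ) : HasDerivAt (normalCDF m 1) (normalPDF m 1 x) x :=
  hasDerivAt_integral_Iio (integrable_normalPDF_one m) (continuous_normalPDF m 1) x

lemma deriv_normalCDF_one (m : ℝ) : deriv (normalCDF m 1) = normalPDF m 1 :=
  funext fun x => (hasDerivAt_normalCDF_one m x).deriv

lemma contDiff_normalCDF_one (m : ℝ) : ContDiff ℝ 1 (normalCDF m 1) := by
  rw [contDiff_one_iff_deriv, deriv_normalCDF_one]
  exact ⟨fun x => (hasDerivAt_normalCDF_one m x).differentiableAt, continuous_normalPDF m 1⟩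

lemma monotone_normalCDF_one (m : ℝ) : Monotone (normalCDF m 1) :=
  monotone_of_deriv_nonneg (contDiff_normalCDF_one m).differentiable_one
    fun x => deriv_normalCDF_one m ▸ normalPDF_nonneg m 1 x

lemma one_sub_normalCDF_one (m b : ℝ) :
    1 - normalCDF m 1 b = ∫ t in Ioi b, normalPDF m 1 t := by
  have hsplit := integral_add_compl (s := Iio b) (μ := volume) measurableSet_Iio
    (integrable_normalPDF_one m)
  rw [compl_Iio, ← setIntegral_congr_set Ioi_ae_eq_Ici, integral_normalPDF_one] at hsplit
  rw [normalCDF]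
  linarith

lemma normalCDF_one_le_one (m b : ℝ) : normalCDF m 1 b ≤ 1 := by
  have := one_sub_normalCDF_one m b
  have := setIntegral_nonneg (s := Ioi b) (μ := volume) measurableSet_Ioi
    fun t _ => normalPDF_nonneg m 1 t
  linarith

lemma one_sub_normalCDF_one_mul_exp_le {s : ℝ} (hs : 0 ≤ s) (b : ℝ) :
    (1 - normalCDF 0 1 b) * exp (s * b) ≤ ∫ t in Ioi b, normalPDF 0 1 t * exp (s * t) := by
  rw [one_sub_normalCDF_one, ← integral_mul_const]
  refine setIntegral_mono_on ((integrable_normalPDF_one 0).mul_const _).integrableOn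
    (integrable_normalPDF_one_mul_exp 0 s).integrableOn measurableSet_Ioi fun t ht => ?_
  exact mul_le_mul_of_nonneg_left (exp_le_exp.2 (mul_le_mul_of_nonneg_left (le_of_lt ht) hs))
    (normalPDF_nonneg 0 1 t)

lemma intervalIntegral_deriv_mul_exp_le {A : ℝ → ℝ} {s a b : ℝ} (hA : ContDiff ℝ 1 A)
    (hlb : ∀ x, normalCDF 0 1 x ≤ A x) (hub : ∀ x, A x ≤ 1) (hs : 0 ≤ s) (hab : a ≤ b) :
    ∫ x in a..b, deriv A x * exp (s * x)
      ≤ (∫ x in a..b, normalPDF 0 1 x * exp (s * x)) + (1 - normalCDF 0 1 b) * exp (s * b) := by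
  set G := fun x => A x - normalCDF 0 1 x
  have hG : ∀ x, HasDerivAt G (deriv A x - normalPDF 0 1 x) x := fun x =>
    ((hA.differentiable one_ne_zero x).hasDerivAt).sub (hasDerivAt_normalCDF_one 0 x)
  have hE : ∀ x, HasDerivAt (fun x => exp (s * x)) (exp (s * x) * s) x := fun x => by
    simpa using ((hasDerivAt_id x).const_mul s).exp
  have hcontA' : Continuous (deriv A) := hA.continuous_deriv le_rfl
  have hcontG : Continuous G := hA.continuous.sub (contDiff_normalCDF_one 0).continuous
  have hparts :
      ∫ x in a..b, (deriv A x - normalPDF 0 1 x) * exp (s * x) + G x * (exp (s * x) * s)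
        = G b * exp (s * b) - G a * exp (s * a) :=
    intervalIntegral.integral_deriv_mul_eq_sub (fun x _ => hG x) (fun x _ => hE x)
      (Continuous.intervalIntegrable (by fun_prop) _ _)
      (Continuous.intervalIntegrable (by fun_prop) _ _)
  have hsplit : ∫ x in a..b, deriv A x * exp (s * x)
      = (∫ x in a..b, (deriv A x - normalPDF 0 1 x) * exp (s * x) + G x * (exp (s * x) * s))
        + (∫ x in a..b, normalPDF 0 1 x * exp (s * x)) - ∫ x in a..b, G x * (exp (s * x) * s) := by
    rw [← intervalIntegral.integral_add, ← intervalIntegral.integral_sub]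
    · congr 1 with x
      ring
    all_goals exact Continuous.intervalIntegrable (by fun_prop) _ _
  have hGa : 0 ≤ G a * exp (s * a) := mul_nonneg (sub_nonneg.2 (hlb a)) (exp_pos _).le
  have hGb : G b * exp (s * b) ≤ (1 - normalCDF 0 1 b) * exp (s * b) :=
    mul_le_mul_of_nonneg_right (sub_le_sub_right (hub b) _) (exp_pos _).le
  have hGE : 0 ≤ ∫ x in a..b, G x * (exp (s * x) * s) :=
    intervalIntegral.integral_nonneg hab fun x _ =>
      mul_nonneg (sub_nonneg.2 (hlb x)) (mul_nonneg (exp_pos _).le hs)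
  linarith

lemma intervalIntegral_deriv_mul_exp_le_exp {A : ℝ → ℝ} {s a b : ℝ} (hA : ContDiff ℝ 1 A)
    (hlb : ∀ x, normalCDF 0 1 x ≤ A x) (hub : ∀ x, A x ≤ 1) (hs : 0 ≤ s) (hab : a ≤ b) :
    ∫ x in a..b, deriv A x * exp (s * x) ≤ exp (s ^ 2 / 2) := by
  have hint := integrable_normalPDF_one_mul_exp 0 s
  calc ∫ x in a..b, deriv A x * exp (s * x)
      ≤ (∫ x in Ioc a b, normalPDF 0 1 x * exp (s * x))
          + ∫ x in Ioi b, normalPDF 0 1 x * exp (s * x) := by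
        rw [← intervalIntegral.integral_of_le hab]
        exact (intervalIntegral_deriv_mul_exp_le hA hlb hub hs hab).trans
          (add_le_add_right (one_sub_normalCDF_one_mul_exp_le hs b) _)
    _ = ∫ x in Ioi a, normalPDF 0 1 x * exp (s * x) := by
        rw [← Ioc_union_Ioi_eq_Ioi hab,
          setIntegral_union Ioc_disjoint_Ioi_same measurableSet_Ioi hint.integrableOn
            hint.integrableOn]
    _ ≤ ∫ x, normalPDF 0 1 x * exp (s * x) :=
        setIntegral_le_integral hint
          (ae_of_all _ fun x => mul_nonneg (normalPDF_nonneg 0 1 x) (exp_pos _).le)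
    _ = exp (s ^ 2 / 2) := by
        rw [integral_normalPDF_one_mul_exp, mul_zero, zero_add]

lemma integrable_deriv_mul_exp {A : ℝ → ℝ} {s : ℝ} (hA : ContDiff ℝ 1 A) (hm : Monotone A)
    (hlb : ∀ x, normalCDF 0 1 x ≤ A x) (hub : ∀ x, A x ≤ 1) (hs : 0 ≤ s) :
    Integrable fun x => deriv A x * exp (s * x) :=
  integrable_of_intervalIntegral_le ((hA.continuous_deriv le_rfl).mul (by fun_prop))
    (fun x => mul_nonneg hm.deriv_nonneg (exp_pos _).le)
    fun _ _ => intervalIntegral_deriv_mul_exp_le_exp hA hlb hub hs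

lemma le_exp_of_mem_RNFidelities {μ s r : ℝ} (hs : 0 ≤ s) (hr : r ∈ RNFidelities μ 1) :
    r ≤ exp (s * (s - μ) / 2) := by
  obtain ⟨A, hA, hm, hlb, hub, rfl⟩ := hr
  have hAint := integrable_deriv_mul_exp hA hm hlb hub hs
  have hAle : ∫ x, deriv A x * exp (s * x) ≤ exp (s ^ 2 / 2) :=
    integral_le_of_intervalIntegral_le hAint
      fun _ _ => intervalIntegral_deriv_mul_exp_le_exp hA hlb hub hs
  set t := exp (-(s * μ) / 2)
  set g := fun x =>
    (t * (deriv A x * exp (s * x)) + t⁻¹ * (normalPDF μ 1 x * exp (-s * x))) / 2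
  have hg : Integrable g :=
    ((hAint.const_mul t).add ((integrable_normalPDF_one_mul_exp μ (-s)).const_mul t⁻¹)).div_const 2
  have hpt : ∀ x, √(deriv A x * normalPDF μ 1 x) ≤ g x := fun x => by
    have hsplit : deriv A x * normalPDF μ 1 x
        = (deriv A x * exp (s * x)) * (normalPDF μ 1 x * exp (-s * x)) := by
      rw [mul_mul_mul_comm, ← exp_add, neg_mul, add_neg_cancel, exp_zero, mul_one]
    rw [hsplit]
    exact sqrt_mul_le_add_div_two (mul_nonneg hm.deriv_nonneg (exp_pos _).le)
      (mul_nonneg (normalPDF_nonneg μ 1 x) (exp_pos _).le) (exp_pos _)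
  calc ∫ x, √(deriv A x * normalPDF μ 1 x)
      ≤ ∫ x, g x :=
        integral_mono_of_nonneg (ae_of_all _ fun _ => Real.sqrt_nonneg _) hg (ae_of_all _ hpt)
    _ = (t * (∫ x, deriv A x * exp (s * x)) + t⁻¹ * exp (-s * μ + (-s) ^ 2 / 2)) / 2 := by
        rw [integral_div, integral_add (hAint.const_mul t)
          ((integrable_normalPDF_one_mul_exp μ (-s)).const_mul t⁻¹), integral_const_mul,
          integral_const_mul, integral_normalPDF_one_mul_exp]
    _ ≤ (t * exp (s ^ 2 / 2) + t⁻¹ * exp (-s * μ + (-s) ^ 2 / 2)) / 2 := by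
        gcongr
    _ = exp (s * (s - μ) / 2) := by
        rw [← exp_neg, ← exp_add, ← exp_add]
        ring_nf

lemma exp_mem_RNFidelities {μ c : ℝ} (hc : c ≤ 0) :
    exp (-(c - μ) ^ 2 / 8) ∈ RNFidelities μ 1 := by
  have hderiv : deriv (fun x => normalCDF 0 1 (x - c)) = normalPDF c 1 := funext fun x => by
    rw [((hasDerivAt_normalCDF_one 0 (x - c)).comp_sub_const x c).deriv,
      normalPDF_one_eq_gaussianPDFReal, normalPDF_one_eq_gaussianPDFReal, gaussianPDFReal_sub,
      zero_add]
  refine ⟨fun x => normalCDF 0 1 (x - c),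
    (contDiff_normalCDF_one 0).comp (contDiff_id.sub contDiff_const),
    (monotone_normalCDF_one 0).comp fun x y hxy => sub_le_sub_right hxy c,
    fun x => monotone_normalCDF_one 0 (by linarith), fun x => normalCDF_one_le_one 0 _, ?_⟩
  simp_rw [hderiv, sqrt_normalPDF_one_mul]
  rw [integral_const_mul, integral_normalPDF_one, mul_one]

theorem stmt11 (μ : ℝ) :
    (0 < μ → RayleighNormal 1 μ = 1 - Real.exp (-μ^2 / 4)) ∧
    (μ ≤ 0 → RayleighNormal 1 μ = 0) := by
  constructor
  · intro hμ
    have hmax : IsGreatest (RNFidelities μ 1) (exp (-μ ^ 2 / 8)) := by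
      refine ⟨by simpa using exp_mem_RNFidelities (μ := μ) le_rfl, fun r hr => ?_⟩
      convert le_exp_of_mem_RNFidelities (s := μ / 2) (by linarith) hr using 2
      ring
    rw [RayleighNormal, hmax.csSup_eq, ← exp_nat_mul]
    ring_nf
  · intro hμ
    have hmax : IsGreatest (RNFidelities μ 1) 1 :=
      ⟨by simpa using exp_mem_RNFidelities (μ := μ) hμ,
        fun r hr => by simpa using le_exp_of_mem_RNFidelities le_rfl hr⟩
    rw [RayleighNormal, hmax.csSup_eq, one_pow, sub_self]
end

section
/- Let β be the unique solution of N(x)/N_{μ,v}(x) = (1-Φ(x))/(1-Φ_{μ,v}(x)) for 0 < v < 1. Then lim_{v→0} β_{μ,v} = μ and lim_{v→0} Φ_{μ,v}(β_{μ,v}) = 0. -/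
/-!
The standard normal hazard rate `h = φ / (1 - Φ)` is increasing, by log-concavity of `φ`.
Writing `t = (x - μ) / √v`, the defining equation of `x = β v` reads `h t = √v * h x`.
If `x > 2|μ|` then `t > x` for `v ≤ 1/4`, contradicting monotonicity; so `x ≤ 2|μ|` and
`h t ≤ √v * h (2|μ|) → 0`. Hence `t < 0` for small `v`, and then
`Φ_{μ,v}(x) = Φ t ≤ φ t / h 0 ≤ h t / h 0 = O(√v)`.
For the location, `√v * φ x ≤ h t ≤ 2 φ t` (as `1 - Φ t ≥ 1/2`) gives
`t² ≤ x² + 2 log 2 - log v`, so `(x - μ)² = v t² = O(v |log v|) → 0`.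
-/

open Real Set Filter Topology MeasureTheory ProbabilityTheory

section Normal

variable {v : ℝ}

lemma normalPDF_eq_gaussianPDFReal (μ : ℝ) (hv : 0 ≤ v) :
    normalPDF μ v = gaussianPDFReal μ v.toNNReal := by
  ext x
  simp [normalPDF, gaussianPDFReal, Real.coe_toNNReal _ hv]

lemma normalPDF_pos (μ : ℝ) (hv : 0 < v) (x : ℝ) : 0 < normalPDF μ v x := by
  unfold normalPDF
  positivity

lemma normalPDF_std_neg (x : ℝ) : normalPDF 0 1 (-x) = normalPDF 0 1 x := by
  simp [normalPDF]

lemma normalPDF_eq_normalPDF_std (μ : ℝ) (hv : 0 < v) (x : ℝ) :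
    normalPDF μ v x = (√v)⁻¹ * normalPDF 0 1 ((x - μ) / √v) := by
  simp only [normalPDF, sub_zero, mul_one, div_pow, sq_sqrt hv.le]
  rw [sqrt_mul (by positivity) v]
  field_simp

lemma integrable_normalPDF (μ : ℝ) (hv : 0 ≤ v) : Integrable (normalPDF μ v) := by
  rw [normalPDF_eq_gaussianPDFReal μ hv]
  exact integrable_gaussianPDFReal _ _

lemma integral_normalPDF (μ : ℝ) (hv : 0 < v) : ∫ x, normalPDF μ v x = 1 := by
  rw [normalPDF_eq_gaussianPDFReal μ hv.le]
  exact integral_gaussianPDFReal_eq_one _ (by simpa using hv)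

lemma setIntegral_normalPDF_pos (μ : ℝ) (hv : 0 < v) {s : Set ℝ}
    (hs0 : volume s ≠ 0) : 0 < ∫ x in s, normalPDF μ v x := by
  rw [setIntegral_pos_iff_support_of_nonneg_ae
    (ae_of_all _ fun x => (normalPDF_pos μ hv x).le) (integrable_normalPDF μ hv.le).integrableOn]
  simpa [Function.support, (normalPDF_pos μ hv _).ne', pos_iff_ne_zero] using hs0

lemma one_sub_normalCDF (μ : ℝ) (hv : 0 < v) (x : ℝ) :
    1 - normalCDF μ v x = ∫ t in Ioi x, normalPDF μ v t := by
  rw [← integral_normalPDF μ hv, ← intervalIntegral.integral_Iio_add_Ici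
    (integrable_normalPDF μ hv.le).integrableOn (integrable_normalPDF μ hv.le).integrableOn,
    integral_Ici_eq_integral_Ioi, normalCDF, add_sub_cancel_left]

lemma normalCDF_pos (μ : ℝ) (hv : 0 < v) (x : ℝ) : 0 < normalCDF μ v x :=
  setIntegral_normalPDF_pos μ hv (by simp)

lemma normalCDF_lt_one (μ : ℝ) (hv : 0 < v) (x : ℝ) : normalCDF μ v x < 1 := by
  have := setIntegral_normalPDF_pos μ hv (s := Ioi x) (by simp)
  linarith [one_sub_normalCDF μ hv x]

lemma normalCDF_mono (μ : ℝ) (hv : 0 < v) : Monotone (normalCDF μ v) := fun _ _ hxy =>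
  setIntegral_mono_set (integrable_normalPDF μ hv.le).integrableOn
    (ae_of_all _ fun x => (normalPDF_pos μ hv x).le) (Iio_subset_Iio hxy).eventuallyLE

lemma normalCDF_std_neg (x : ℝ) : normalCDF 0 1 (-x) = 1 - normalCDF 0 1 x := by
  rw [one_sub_normalCDF 0 one_pos, normalCDF, ← integral_Iic_eq_integral_Iio,
    ← integral_comp_neg_Ioi]
  simp_rw [normalPDF_std_neg]

lemma normalCDF_std_zero : normalCDF 0 1 0 = 1 / 2 := by
  have h := normalCDF_std_neg 0
  rw [neg_zero] at h
  linarith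

lemma normalCDF_eq_gaussianReal (μ : ℝ) (hv : 0 < v) (x : ℝ) :
    normalCDF μ v x = (gaussianReal μ v.toNNReal).real (Iio x) := by
  rw [measureReal_def, gaussianReal_apply_eq_integral _ (by simpa using hv),
    ENNReal.toReal_ofReal (setIntegral_nonneg measurableSet_Iio fun _ _ =>
      gaussianPDFReal_nonneg _ _ _), normalCDF, normalPDF_eq_gaussianPDFReal μ hv.le]

lemma normalCDF_eq_normalCDF_std (μ : ℝ) (hv : 0 < v) (x : ℝ) :
    normalCDF μ v x = normalCDF 0 1 ((x - μ) / √v) := by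
  have hmap : (gaussianReal μ v.toNNReal).map (fun y => (y - μ) / √v) = gaussianReal 0 1 := by
    change Measure.map ((· / √v) ∘ (· - μ)) _ = _
    rw [← Measure.map_map (measurable_div_const _) (measurable_sub_const μ),
      gaussianReal_map_sub_const, gaussianReal_map_div_const, sub_self, zero_div]
    congr
    ext
    simp [sq_sqrt hv.le, hv.le, hv.ne']
  rw [normalCDF_eq_gaussianReal μ hv, normalCDF_eq_gaussianReal 0 one_pos, Real.toNNReal_one,
    ← hmap, map_measureReal_apply (by fun_prop) measurableSet_Iio]
  congr 1
  ext y
  simp [div_lt_div_iff_of_pos_right (sqrt_pos.2 hv)]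

end Normal

noncomputable def normalHazard (μ v x : ℝ) : ℝ :=
  normalPDF μ v x / (1 - normalCDF μ v x)

section Hazard

variable {v : ℝ}

lemma normalHazard_pos (μ : ℝ) (hv : 0 < v) (x : ℝ) : 0 < normalHazard μ v x :=
  div_pos (normalPDF_pos μ hv x) (sub_pos.2 (normalCDF_lt_one μ hv x))

lemma normalPDF_le_normalHazard (μ : ℝ) (hv : 0 < v) (x : ℝ) :
    normalPDF μ v x ≤ normalHazard μ v x :=
  le_div_self (normalPDF_pos μ hv x).le (sub_pos.2 (normalCDF_lt_one μ hv x))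
    (by linarith [normalCDF_pos μ hv x])

lemma normalHazard_eq_normalHazard_std (μ : ℝ) (hv : 0 < v) (x : ℝ) :
    normalHazard μ v x = (√v)⁻¹ * normalHazard 0 1 ((x - μ) / √v) := by
  rw [normalHazard, normalHazard, normalPDF_eq_normalPDF_std μ hv,
    normalCDF_eq_normalCDF_std μ hv, mul_div_assoc]

lemma normalPDF_std_mul_shift_le {a b u : ℝ} (hab : a ≤ b) (hau : a ≤ u) :
    normalPDF 0 1 a * normalPDF 0 1 (u + (b - a)) ≤ normalPDF 0 1 b * normalPDF 0 1 u := by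
  simp only [normalPDF]
  rw [mul_mul_mul_comm, mul_mul_mul_comm _ (rexp _), ← exp_add, ← exp_add]
  refine mul_le_mul_of_nonneg_left (exp_le_exp.2 ?_) (by positivity)
  nlinarith [mul_nonneg (sub_nonneg.2 hab) (sub_nonneg.2 hau)]

lemma normalPDF_std_mul_one_sub_normalCDF_le {a b : ℝ} (hab : a ≤ b) :
    normalPDF 0 1 a * (1 - normalCDF 0 1 b) ≤ normalPDF 0 1 b * (1 - normalCDF 0 1 a) := by
  have hshift : ∫ u in Ioi a, normalPDF 0 1 (u + (b - a)) = ∫ u in Ioi b, normalPDF 0 1 u := by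
    simpa using (measurePreserving_add_right volume (b - a)).setIntegral_preimage_emb
      (measurableEmbedding_addRight (b - a)) (normalPDF 0 1) (Ioi b)
  have hint := integrable_normalPDF 0 zero_le_one
  rw [one_sub_normalCDF 0 one_pos, one_sub_normalCDF 0 one_pos, ← hshift, ← integral_const_mul,
    ← integral_const_mul]
  exact setIntegral_mono_on ((hint.comp_add_right (b - a)).const_mul _).integrableOn
    (hint.const_mul _).integrableOn measurableSet_Ioi
    fun u hu => normalPDF_std_mul_shift_le hab hu.le

lemma monotone_normalHazard_std : Monotone (normalHazard 0 1) := fun a b hab => by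
  rw [normalHazard, normalHazard, div_le_div_iff₀ (sub_pos.2 (normalCDF_lt_one 0 one_pos a))
    (sub_pos.2 (normalCDF_lt_one 0 one_pos b))]
  exact normalPDF_std_mul_one_sub_normalCDF_le hab

lemma normalCDF_std_le_div_normalHazard_zero {t : ℝ} (ht : t ≤ 0) :
    normalCDF 0 1 t ≤ normalPDF 0 1 t / normalHazard 0 1 0 := by
  have h : normalHazard 0 1 0 ≤ normalPDF 0 1 (-t) / (1 - normalCDF 0 1 (-t)) :=
    monotone_normalHazard_std (neg_nonneg.2 ht)
  rw [normalPDF_std_neg, normalCDF_std_neg, sub_sub_cancel,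
    le_div_iff₀ (normalCDF_pos 0 one_pos t)] at h
  rwa [le_div_iff₀ (normalHazard_pos 0 one_pos 0), mul_comm]

lemma normalHazard_std_le_two_mul {t : ℝ} (ht : t ≤ 0) :
    normalHazard 0 1 t ≤ 2 * normalPDF 0 1 t := by
  have hhalf : normalCDF 0 1 t ≤ 1 / 2 := normalCDF_std_zero ▸ normalCDF_mono 0 one_pos ht
  rw [normalHazard, div_le_iff₀ (sub_pos.2 (normalCDF_lt_one 0 one_pos t))]
  nlinarith [normalPDF_pos 0 one_pos t]

lemma sq_le_of_mul_normalPDF_std_le {s x t : ℝ} (hs : 0 < s)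
    (h : s * normalPDF 0 1 x ≤ 2 * normalPDF 0 1 t) :
    t ^ 2 ≤ x ^ 2 + 2 * log 2 - 2 * log s := by
  simp only [normalPDF, mul_left_comm s, mul_left_comm (2 : ℝ)] at h
  have h' := log_le_log (by positivity) (le_of_mul_le_mul_left h (by positivity))
  rw [log_mul hs.ne' (exp_pos _).ne', log_mul two_ne_zero (exp_pos _).ne', log_exp, log_exp] at h'
  linarith

end Hazard

section HazardEquation

variable {μ v x : ℝ}

lemma normalHazard_std_standardized_eq (hv : 0 < v)
    (hx : normalHazard 0 1 x = normalHazard μ v x) :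
    normalHazard 0 1 ((x - μ) / √v) = √v * normalHazard 0 1 x := by
  rw [hx, normalHazard_eq_normalHazard_std μ hv, ← mul_assoc,
    mul_inv_cancel₀ (sqrt_pos.2 hv).ne', one_mul]

lemma le_two_mul_abs_of_normalHazard_eq (hv : 0 < v) (hv4 : v ≤ 1 / 4)
    (hx : normalHazard 0 1 x = normalHazard μ v x) : x ≤ 2 * |μ| := by
  by_contra! hx'
  have hx0 : 0 ≤ x := by linarith [abs_nonneg μ]
  have hsv : √v ≤ 1 / 2 := sqrt_le_iff.2 ⟨by norm_num, by linarith⟩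
  have hxt : x ≤ (x - μ) / √v := by
    rw [le_div_iff₀ (sqrt_pos.2 hv)]
    nlinarith [le_abs_self μ, mul_le_mul_of_nonneg_left hsv hx0]
  have h := monotone_normalHazard_std hxt
  rw [normalHazard_std_standardized_eq hv hx] at h
  nlinarith [normalHazard_pos 0 one_pos x]

lemma sub_div_sqrt_neg_of_normalHazard_eq (hv : 0 < v) (hv4 : v ≤ 1 / 4)
    (hx : normalHazard 0 1 x = normalHazard μ v x)
    (hsmall : √v * normalHazard 0 1 (2 * |μ|) < normalHazard 0 1 0) : (x - μ) / √v < 0 := by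
  refine monotone_normalHazard_std.reflect_lt ?_
  rw [normalHazard_std_standardized_eq hv hx]
  exact (mul_le_mul_of_nonneg_left (monotone_normalHazard_std
    (le_two_mul_abs_of_normalHazard_eq hv hv4 hx)) (sqrt_nonneg v)).trans_lt hsmall

lemma normalCDF_le_of_normalHazard_eq (hv : 0 < v) (hv4 : v ≤ 1 / 4)
    (hx : normalHazard 0 1 x = normalHazard μ v x)
    (hsmall : √v * normalHazard 0 1 (2 * |μ|) < normalHazard 0 1 0) :
    normalCDF μ v x ≤ √v * (normalHazard 0 1 (2 * |μ|) / normalHazard 0 1 0) := by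
  have h0 := normalHazard_pos 0 one_pos 0
  rw [normalCDF_eq_normalCDF_std μ hv, ← mul_div_assoc]
  calc normalCDF 0 1 ((x - μ) / √v)
      ≤ normalPDF 0 1 ((x - μ) / √v) / normalHazard 0 1 0 :=
        normalCDF_std_le_div_normalHazard_zero
          (sub_div_sqrt_neg_of_normalHazard_eq hv hv4 hx hsmall).le
    _ ≤ normalHazard 0 1 ((x - μ) / √v) / normalHazard 0 1 0 :=
        div_le_div_of_nonneg_right (normalPDF_le_normalHazard 0 one_pos _) h0.le
    _ ≤ √v * normalHazard 0 1 (2 * |μ|) / normalHazard 0 1 0 := by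
        rw [normalHazard_std_standardized_eq hv hx]
        gcongr
        exact monotone_normalHazard_std (le_two_mul_abs_of_normalHazard_eq hv hv4 hx)

lemma sq_sub_le_of_normalHazard_eq (hv : 0 < v) (hv4 : v ≤ 1 / 4)
    (hx : normalHazard 0 1 x = normalHazard μ v x)
    (hsmall : √v * normalHazard 0 1 (2 * |μ|) < normalHazard 0 1 0) :
    (x - μ) ^ 2 ≤ (4 * μ ^ 2 + 4 * log 2) * v - 2 * (v * log v) := by
  have ht := (sub_div_sqrt_neg_of_normalHazard_eq hv hv4 hx hsmall).le
  have hpdf : √v * normalPDF 0 1 x ≤ 2 * normalPDF 0 1 ((x - μ) / √v) :=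
    calc √v * normalPDF 0 1 x ≤ √v * normalHazard 0 1 x :=
          mul_le_mul_of_nonneg_left (normalPDF_le_normalHazard 0 one_pos x) (sqrt_nonneg v)
      _ = normalHazard 0 1 ((x - μ) / √v) := (normalHazard_std_standardized_eq hv hx).symm
      _ ≤ 2 * normalPDF 0 1 ((x - μ) / √v) := normalHazard_std_le_two_mul ht
  have hsq := sq_le_of_mul_normalPDF_std_le (sqrt_pos.2 hv) hpdf
  rw [log_sqrt hv.le, div_pow, sq_sqrt hv.le, div_le_iff₀ hv] at hsq
  nlinarith [sq_nonneg (x - μ), sq_nonneg (x - 2 * μ)]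

end HazardEquation

section Limits

variable {μ : ℝ} {β : ℝ → ℝ}

lemma eventually_sqrt_mul_normalHazard_lt (μ : ℝ) :
    ∀ᶠ v in 𝓝[>] 0, 0 < v ∧ v ≤ 1 / 4 ∧
      √v * normalHazard 0 1 (2 * |μ|) < normalHazard 0 1 0 := by
  have hcont : Continuous fun v => √v * normalHazard 0 1 (2 * |μ|) := by fun_prop
  have hsqrt := (hcont.tendsto' 0 0 (by simp)).mono_left (nhdsWithin_le_nhds (s := Ioi 0))
  filter_upwards [self_mem_nhdsWithin,
    nhdsWithin_le_nhds (Iic_mem_nhds (by norm_num : (0 : ℝ) < 1 / 4)),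
    hsqrt.eventually (gt_mem_nhds (normalHazard_pos 0 one_pos 0))] with v hv hv4 hsmall
  exact ⟨hv, hv4, hsmall⟩

lemma tendsto_of_eventually_normalHazard_eq
    (hβ : ∀ᶠ v in 𝓝[>] 0, normalHazard 0 1 (β v) = normalHazard μ v (β v)) :
    Tendsto β (𝓝[>] 0) (𝓝 μ) := by
  have hcont : Continuous fun v => √((4 * μ ^ 2 + 4 * log 2) * v - 2 * (v * log v)) :=
    ((continuous_const_mul _).sub (continuous_mul_log.const_mul 2)).sqrt
  rw [tendsto_iff_dist_tendsto_zero]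
  refine squeeze_zero' (Eventually.of_forall fun _ => dist_nonneg) ?_
    ((hcont.tendsto' 0 0 (by simp)).mono_left nhdsWithin_le_nhds)
  filter_upwards [hβ, eventually_sqrt_mul_normalHazard_lt μ] with v hv ⟨hv0, hv4, hsmall⟩
  rw [dist_eq, ← sqrt_sq_eq_abs]
  exact sqrt_le_sqrt (sq_sub_le_of_normalHazard_eq hv0 hv4 hv hsmall)

lemma tendsto_normalCDF_of_eventually_normalHazard_eq
    (hβ : ∀ᶠ v in 𝓝[>] 0, normalHazard 0 1 (β v) = normalHazard μ v (β v)) :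
    Tendsto (fun v => normalCDF μ v (β v)) (𝓝[>] 0) (𝓝 0) := by
  have hcont : Continuous fun v =>
      √v * (normalHazard 0 1 (2 * |μ|) / normalHazard 0 1 0) := by fun_prop
  refine squeeze_zero' ?_ ?_ ((hcont.tendsto' 0 0 (by simp)).mono_left nhdsWithin_le_nhds)
  · filter_upwards [self_mem_nhdsWithin] with v hv
    exact (normalCDF_pos μ hv _).le
  · filter_upwards [hβ, eventually_sqrt_mul_normalHazard_lt μ] with v hv ⟨hv0, hv4, hsmall⟩
    exact normalCDF_le_of_normalHazard_eq hv0 hv4 hv hsmall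

end Limits

theorem stmt15 (μ : ℝ) (β : ℝ → ℝ)
    (hβ : ∀ v ∈ Set.Ioo (0 : ℝ) 1,
      normalPDF 0 1 (β v) / normalPDF μ v (β v)
        = (1 - normalCDF 0 1 (β v)) / (1 - normalCDF μ v (β v))) :
    Filter.Tendsto β (nhdsWithin 0 (Set.Ioo 0 1)) (nhds μ) ∧
    Filter.Tendsto (fun v => normalCDF μ v (β v)) (nhdsWithin 0 (Set.Ioo 0 1)) (nhds 0) := by
  have hsol : ∀ᶠ v in 𝓝[>] 0, normalHazard 0 1 (β v) = normalHazard μ v (β v) := by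
    filter_upwards [Ioo_mem_nhdsGT one_pos] with v hv
    exact (div_eq_div_iff_div_eq_div' (normalPDF_pos μ hv.1 _).ne'
      (sub_pos.2 (normalCDF_lt_one 0 one_pos _)).ne').1 (hβ v hv)
  have hfilter : 𝓝[Ioo 0 1] (0 : ℝ) ≤ 𝓝[>] 0 := nhdsWithin_mono _ Ioo_subset_Ioi_self
  exact ⟨(tendsto_of_eventually_normalHazard_eq hsol).mono_left hfilter,
    (tendsto_normalCDF_of_eventually_normalHazard_eq hsol).mono_left hfilter⟩
end

section
/- For L ≥ n, the maximum over L-copy target fidelity of converting n copies of the EPR state to L copies by LOCC (equivalently, the maximum majorization-conversion fidelity from the uniform distribution on 2^n points to the uniform distribution on 2^L points) equals √(2^{n-L}). -/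
/-- The sum of the `l` largest values of `P`. -/
noncomputable def maxSum {α : Type*} [Fintype α] (P : α → ℝ) (l : ℕ) : ℝ :=
  (Finset.univ.powerset.filter (fun s => s.card ≤ l)).sup'
    ⟨∅, by simp⟩ (fun s => ∑ x ∈ s, P x)

/-- `P ≺ Q` : `P` is majorized by `Q`. -/
def Majorized {α β : Type*} [Fintype α] [Fintype β] (P : α → ℝ) (Q : β → ℝ) : Prop :=
  ∀ l : ℕ, maxSum P l ≤ maxSum Q l

lemma maxSum_le {α : Type*} [Fintype α] (P : α → ℝ) (l : ℕ) (c : ℝ)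
    (hc : ∀ s : Finset α, s.card ≤ l → ∑ x ∈ s, P x ≤ c) : maxSum P l ≤ c := by
  apply Finset.sup'_le
  intro s hs
  simp only [Finset.mem_filter, Finset.mem_powerset] at hs
  exact hc s hs.2

lemma le_maxSum {α : Type*} [Fintype α] (P : α → ℝ) (l : ℕ) (s : Finset α)
    (hs : s.card ≤ l) : ∑ x ∈ s, P x ≤ maxSum P l := by
  unfold maxSum
  apply Finset.le_sup' (fun s => ∑ x ∈ s, P x)
  simp [hs]

lemma exists_maxSum {α : Type*} [Fintype α] (P : α → ℝ) (l : ℕ) :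
    ∃ s : Finset α, s.card ≤ l ∧ maxSum P l = ∑ x ∈ s, P x := by
  obtain ⟨s, hs, heq⟩ := Finset.exists_mem_eq_sup'
    (⟨∅, by simp⟩ : (Finset.univ.powerset.filter (fun s : Finset α => s.card ≤ l)).Nonempty)
    (fun s => ∑ x ∈ s, P x)
  simp only [Finset.mem_filter, Finset.mem_powerset] at hs
  exact ⟨s, hs.2, heq⟩

theorem stmt18 (n L : ℕ) (h : n ≤ L) :
    IsGreatest
      {r | ∃ P' : Fin (2 ^ L) → ℝ, (∀ y, 0 ≤ P' y) ∧ (∑ y, P' y = 1) ∧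
        Majorized (fun _ : Fin (2 ^ n) => ((2 : ℝ) ^ n)⁻¹) P' ∧
        r = ∑ y, Real.sqrt (P' y * ((2 : ℝ) ^ L)⁻¹)}
      (Real.sqrt ((2 : ℝ) ^ n / (2 : ℝ) ^ L)) := by
  have hpow : (2 : ℕ) ^ n ≤ 2 ^ L := Nat.pow_le_pow_right (by norm_num) h
  have h2n : (0 : ℝ) < (2 : ℝ) ^ n := by positivity
  have h2L : (0 : ℝ) < (2 : ℝ) ^ L := by positivity
  constructor
  · -- membership: the truncated uniform distribution
    refine ⟨fun y => if (y : ℕ) < 2 ^ n then ((2 : ℝ) ^ n)⁻¹ else 0, ?_, ?_, ?_, ?_⟩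
    · intro y; dsimp only; split <;> positivity
    · rw [Fin.sum_univ_eq_sum_range (fun i => if i < 2 ^ n then ((2 : ℝ) ^ n)⁻¹ else 0)]
      rw [← Finset.sum_filter]
      have : (Finset.range (2 ^ L)).filter (fun i => i < 2 ^ n) = Finset.range (2 ^ n) := by
        ext i
        simp only [Finset.mem_filter, Finset.mem_range]
        omega
      rw [this, Finset.sum_const, Finset.card_range, nsmul_eq_mul]
      push_cast
      field_simp
    · intro l
      set m := min l (2 ^ n) with hm
      have hmL : m ≤ 2 ^ L := le_trans (min_le_right _ _) hpow
      have h1 : maxSum (fun _ : Fin (2 ^ n) => ((2 : ℝ) ^ n)⁻¹) l ≤ m * ((2 : ℝ) ^ n)⁻¹ := by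
        apply maxSum_le
        intro s hs
        rw [Finset.sum_const, nsmul_eq_mul]
        have hcard : s.card ≤ m := by
          have := s.card_le_univ
          simp only [Finset.card_univ, Fintype.card_fin] at this
          omega
        exact mul_le_mul_of_nonneg_right (by exact_mod_cast hcard) (by positivity)
      refine h1.trans ?_
      have h2 : ∑ x ∈ Finset.univ.map (Fin.castLEEmb hmL),
          (fun y : Fin (2 ^ L) => if (y : ℕ) < 2 ^ n then ((2 : ℝ) ^ n)⁻¹ else 0) x
          = m * ((2 : ℝ) ^ n)⁻¹ := by
        rw [Finset.sum_map]
        have : ∀ i : Fin m, (fun y : Fin (2 ^ L) => if (y : ℕ) < 2 ^ n then ((2 : ℝ) ^ n)⁻¹ else 0)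
            (Fin.castLEEmb hmL i) = ((2 : ℝ) ^ n)⁻¹ := by
          intro i
          have : (i : ℕ) < 2 ^ n := lt_of_lt_of_le i.isLt (min_le_right _ _)
          simp [Fin.castLEEmb, this]
        rw [Finset.sum_congr rfl (fun i _ => this i)]
        simp [mul_comm]
      rw [← h2]
      apply le_maxSum
      rw [Finset.card_map, Finset.card_univ, Fintype.card_fin]
      exact min_le_left _ _
    · rw [Fin.sum_univ_eq_sum_range
        (fun i => Real.sqrt ((if i < 2 ^ n then ((2 : ℝ) ^ n)⁻¹ else 0) * ((2 : ℝ) ^ L)⁻¹))]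
      have : ∀ i ∈ Finset.range (2 ^ L),
          Real.sqrt ((if i < 2 ^ n then ((2 : ℝ) ^ n)⁻¹ else 0) * ((2 : ℝ) ^ L)⁻¹)
          = if i < 2 ^ n then Real.sqrt (((2 : ℝ) ^ n)⁻¹ * ((2 : ℝ) ^ L)⁻¹) else 0 := by
        intro i _
        split <;> simp
      rw [Finset.sum_congr rfl this, ← Finset.sum_filter]
      have heq : (Finset.range (2 ^ L)).filter (fun i => i < 2 ^ n) = Finset.range (2 ^ n) := by
        ext i
        simp only [Finset.mem_filter, Finset.mem_range]
        omega
      rw [heq, Finset.sum_const, Finset.card_range, nsmul_eq_mul]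
      rw [show (((2 : ℝ) ^ n)⁻¹ * ((2 : ℝ) ^ L)⁻¹)
          = ((2:ℝ)^n / (2:ℝ)^L) * (((2:ℝ)^n)⁻¹)^2 by field_simp]
      rw [Real.sqrt_mul (by positivity), Real.sqrt_sq (by positivity)]
      push_cast
      field_simp
  · -- upper bound
    rintro r ⟨P', hP0, hP1, hmaj, rfl⟩
    have key := hmaj (2 ^ n)
    have hlow : (1 : ℝ) ≤ maxSum (fun _ : Fin (2 ^ n) => ((2 : ℝ) ^ n)⁻¹) (2 ^ n) := by
      have := le_maxSum (fun _ : Fin (2 ^ n) => ((2 : ℝ) ^ n)⁻¹) (2 ^ n) Finset.univ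
        (by simp)
      rw [Finset.sum_const, nsmul_eq_mul, Finset.card_univ, Fintype.card_fin] at this
      rw [show ((2 ^ n : ℕ) : ℝ) * ((2 : ℝ) ^ n)⁻¹ = 1 by push_cast; field_simp] at this
      exact this
    obtain ⟨S, hScard, hSeq⟩ := exists_maxSum P' (2 ^ n)
    have hS1 : (1 : ℝ) ≤ ∑ x ∈ S, P' x := by rw [← hSeq]; exact hlow.trans key
    -- complement sum is 0
    have hcompl : ∀ y ∈ Sᶜ, P' y = 0 := by
      have hsum : ∑ x ∈ S, P' x + ∑ x ∈ Sᶜ, P' x = 1 := by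
        rw [Finset.sum_add_sum_compl, hP1]
      have hc0 : ∑ x ∈ Sᶜ, P' x ≤ 0 := by linarith
      have hc0' : 0 ≤ ∑ x ∈ Sᶜ, P' x := Finset.sum_nonneg (fun y _ => hP0 y)
      intro y hy
      exact (Finset.sum_eq_zero_iff_of_nonneg (fun y _ => hP0 y)).mp (le_antisymm hc0 hc0') y hy
    have hSsum : ∑ x ∈ S, P' x = 1 := by
      have hsum : ∑ x ∈ S, P' x + ∑ x ∈ Sᶜ, P' x = 1 := by
        rw [Finset.sum_add_sum_compl, hP1]
      rw [Finset.sum_eq_zero hcompl] at hsum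
      linarith
    -- reduce to sum over S
    have hred : ∑ y, Real.sqrt (P' y * ((2 : ℝ) ^ L)⁻¹)
        = ∑ y ∈ S, Real.sqrt (P' y * ((2 : ℝ) ^ L)⁻¹) := by
      have hz : ∑ y ∈ Sᶜ, Real.sqrt (P' y * ((2 : ℝ) ^ L)⁻¹) = 0 :=
        Finset.sum_eq_zero (fun y hy => by rw [hcompl y hy]; simp)
      rw [← Finset.sum_add_sum_compl S, hz, add_zero]
    rw [hred]
    have hnn : 0 ≤ ∑ y ∈ S, Real.sqrt (P' y * ((2 : ℝ) ^ L)⁻¹) :=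
      Finset.sum_nonneg (fun y _ => Real.sqrt_nonneg _)
    rw [Real.le_sqrt hnn]
    calc (∑ y ∈ S, Real.sqrt (P' y * ((2 : ℝ) ^ L)⁻¹)) ^ 2
        ≤ S.card * ∑ y ∈ S, Real.sqrt (P' y * ((2 : ℝ) ^ L)⁻¹) ^ 2 :=
          sq_sum_le_card_mul_sum_sq
      _ = S.card * ∑ y ∈ S, P' y * ((2 : ℝ) ^ L)⁻¹ := by
          congr 1
          exact Finset.sum_congr rfl (fun y _ =>
            Real.sq_sqrt (mul_nonneg (hP0 y) (by positivity)))
      _ = S.card * ((2 : ℝ) ^ L)⁻¹ := by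
          rw [← Finset.sum_mul, hSsum, one_mul]
      _ ≤ (2 : ℝ) ^ n * ((2 : ℝ) ^ L)⁻¹ := by
          apply mul_le_mul_of_nonneg_right _ (by positivity)
          exact_mod_cast hScard
      _ = (2 : ℝ) ^ n / (2 : ℝ) ^ L := by ring
    positivity
end
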